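/- arXiv:math-ph/0605022 — 2 statements merged into one kernel-verified Lean document; each statement's English description precedes it below -/
import Mathlib

section
/- For any two formal power series identities: if F(n) = Σ_{p=0}^{2n+1} G(2n+1−p)·(G(p) + G(p−1)) for all n ≥ 0 (with G(−1) := 0), then setting ξ̄ = 2ξ − ξ², the generating functions f(ξ̄) = Σ_n (1−ξ̄)^n F(n) and g(ξ) = Σ_n (1−ξ)^n G(n) satisfy (1−ξ)·f(ξ̄) = odd part in (1−ξ) of [g(ξ)²·(2−ξ)]. -/
/-!
The `n`-th coefficient of `g²(1 + x)` is `c_n + c_{n-1}`, where `c_m = Σ_{p ≤ m} G p G (m - p)`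
is the `m`-th coefficient of `g²`. In the defining sum of `F n`, the terms `G(2n+1-p) G p` give
`c_{2n+1}` and, after shifting `p ↦ p + 1`, the terms `G(2n+1-p) G(p-1)` give `c_{2n}`.
Hence `F n` is the coefficient of `x^{2n+1}` in `g²(1 + x)`, which is that of `x · f(ξ̄)`.
-/

open PowerSeries

section CommSemiring

variable {R : Type*} [CommSemiring R]

theorem PowerSeries.coeff_mk_sq (G : ℕ → R) (n : ℕ) :
    coeff n (mk G ^ 2) = ∑ p ∈ Finset.range (n + 1), G p * G (n - p) := by
  rw [sq, coeff_mul, Finset.Nat.sum_antidiagonal_eq_sum_range_succ_mk]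
  simp only [coeff_mk]

theorem PowerSeries.coeff_succ_mul_one_add_X (φ : R⟦X⟧) (n : ℕ) :
    coeff (n + 1) (φ * (1 + X)) = coeff (n + 1) φ + coeff n φ := by
  rw [mul_add, mul_one, map_add, coeff_succ_mul_X]

theorem PowerSeries.coeff_X_mul_mk_even (a : ℕ → R) (k : ℕ) :
    coeff k (X * mk fun m => if m % 2 = 0 then a (m / 2) else 0) =
      if Odd k then a (k / 2) else 0 := by
  rcases k with _ | m
  · simp
  · rw [coeff_succ_X_mul, coeff_mk]
    simp only [Nat.odd_iff]
    split_ifs <;> first | rfl | (congr 1; omega)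

theorem sum_range_mul_add_shift (G : ℕ → R) (m : ℕ) :
    ∑ p ∈ Finset.range (m + 2), G (m + 1 - p) * (G p + if p = 0 then 0 else G (p - 1)) =
      ∑ p ∈ Finset.range (m + 2), G p * G (m + 1 - p) +
        ∑ p ∈ Finset.range (m + 1), G p * G (m - p) := by
  have shifted : ∑ p ∈ Finset.range (m + 2), G (m + 1 - p) * (if p = 0 then 0 else G (p - 1)) =
      ∑ p ∈ Finset.range (m + 1), G p * G (m - p) := by
    rw [Finset.sum_range_succ']
    simp [mul_comm]
  simp only [mul_add, Finset.sum_add_distrib, shifted, mul_comm (G (m + 1 - _)) (G _)]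

end CommSemiring

/-- If `F(n) = Σ_{p=0}^{2n+1} G(2n+1−p)(G(p) + G(p−1))` (with `G(−1) := 0`), then as formal
power series in `x = 1−ξ` (so `1−ξ̄ = x²`, `2−ξ = 1+x`), one has
`(1−ξ)·f(ξ̄) = odd part in x of [g(ξ)²(2−ξ)]`, where `f(ξ̄) = Σ F(n) x^{2n}` and
`g(ξ) = Σ G(n) x^n`. -/
theorem gen_fn_odd_part (F G : ℕ → ℝ)
    (hF : ∀ n, F n = ∑ p ∈ Finset.range (2 * n + 2),
      G (2 * n + 1 - p) * (G p + if p = 0 then 0 else G (p - 1))) :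
    ∀ k, (PowerSeries.coeff (R := ℝ) k)
        (PowerSeries.X * PowerSeries.mk (fun m => if m % 2 = 0 then F (m / 2) else 0)) =
      if Odd k then
        (PowerSeries.coeff (R := ℝ) k) ((PowerSeries.mk G) ^ 2 * (1 + PowerSeries.X))
      else 0 := by
  intro k
  rw [coeff_X_mul_mk_even]
  split_ifs with hk
  · obtain ⟨n, rfl⟩ := hk
    rw [coeff_succ_mul_one_add_X, coeff_mk_sq, coeff_mk_sq, Nat.mul_add_div two_pos, hF,
      sum_range_mul_add_shift]
    norm_num
  · rfl
end

section
/- The soft-edge kernel identity: for all real x ≠ y, (Ai(x)Ai'(y) − Ai(y)Ai'(x))/(x − y) = ∫_0^∞ Ai(x+t)Ai(y+t) dt, where Ai is the Airy function satisfying Ai''(z) = z·Ai(z) and Ai, Ai' → 0 at +∞. -/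
open MeasureTheory Filter

/-! The Wronskian `W(t) = Ai(x+t) Ai'(y+t) - Ai(y+t) Ai'(x+t)` of the two shifted Airy functions
satisfies `W' = (y - x) Ai(x+t) Ai(y+t)`, because the shifted functions solve `w'' = (x+t) w` and
`w'' = (y+t) w`. Since `W → 0` at `+∞`, integrating over `(0, ∞)` gives
`(y - x) ∫_0^∞ Ai(x+t) Ai(y+t) dt = -W(0)`. -/

theorem hasDerivAt_wronskian {𝕜 : Type*} [NontriviallyNormedField 𝕜]
    {u u' u'' v v' v'' : 𝕜 → 𝕜} {t : 𝕜}
    (hu : HasDerivAt u (u' t) t) (hu' : HasDerivAt u' (u'' t) t)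
    (hv : HasDerivAt v (v' t) t) (hv' : HasDerivAt v' (v'' t) t) :
    HasDerivAt (fun s => u s * v' s - v s * u' s) (u t * v'' t - v t * u'' t) t :=
  ((hu.mul hv').sub (hv.mul hu')).congr_deriv (by ring)

section Airy

variable {Ai Ai' : ℝ → ℝ}

theorem hasDerivAt_airy_wronskian_shift (hAi : ∀ z, HasDerivAt Ai (Ai' z) z)
    (hAi' : ∀ z, HasDerivAt Ai' (z * Ai z) z) (x y t : ℝ) :
    HasDerivAt (fun s => Ai (x + s) * Ai' (y + s) - Ai (y + s) * Ai' (x + s))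
      ((y - x) * (Ai (x + t) * Ai (y + t))) t :=
  (hasDerivAt_wronskian (u'' := fun s => (x + s) * Ai (x + s))
    (v'' := fun s => (y + s) * Ai (y + s))
    ((hAi _).comp_const_add x t) ((hAi' _).comp_const_add x t)
    ((hAi _).comp_const_add y t) ((hAi' _).comp_const_add y t)).congr_deriv (by ring)

theorem tendsto_airy_wronskian_shift (hAi0 : Tendsto Ai atTop (nhds 0))
    (hAi'0 : Tendsto Ai' atTop (nhds 0)) (x y : ℝ) :
    Tendsto (fun s => Ai (x + s) * Ai' (y + s) - Ai (y + s) * Ai' (x + s)) atTop (nhds 0) := by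
  have shift {g : ℝ → ℝ} (hg : Tendsto g atTop (nhds 0)) (a : ℝ) :
      Tendsto (fun s => g (a + s)) atTop (nhds 0) :=
    hg.comp (tendsto_atTop_add_const_left _ a tendsto_id)
  simpa using ((shift hAi0 x).mul (shift hAi'0 y)).sub ((shift hAi0 y).mul (shift hAi'0 x))

end Airy

/-- Soft-edge (Airy) kernel identity: for a solution `Ai` of `w'' = z w` decaying together
with its derivative at `+∞` (with the integrals converging), for all `x ≠ y`,
`(Ai(x)Ai'(y) − Ai(y)Ai'(x))/(x−y) = ∫_0^∞ Ai(x+t)Ai(y+t) dt`. -/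
theorem airy_kernel_identity (Ai Ai' : ℝ → ℝ)
    (hAi : ∀ z, HasDerivAt Ai (Ai' z) z)
    (hAi' : ∀ z, HasDerivAt Ai' (z * Ai z) z)
    (hAi0 : Tendsto Ai atTop (nhds 0))
    (hAi'0 : Tendsto Ai' atTop (nhds 0))
    (hint : ∀ x y : ℝ, IntegrableOn (fun t => Ai (x + t) * Ai (y + t)) (Set.Ioi 0)) :
    ∀ x y : ℝ, x ≠ y →
      (Ai x * Ai' y - Ai y * Ai' x) / (x - y) =
        ∫ t in Set.Ioi (0 : ℝ), Ai (x + t) * Ai (y + t) := by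
  intro x y hxy
  have key := integral_Ioi_of_hasDerivAt_of_tendsto'
    (fun t _ => hasDerivAt_airy_wronskian_shift hAi hAi' x y t)
    ((hint x y).const_mul (y - x)) (tendsto_airy_wronskian_shift hAi0 hAi'0 x y)
  rw [integral_const_mul] at key
  simp only [add_zero, zero_sub] at key
  rw [div_eq_iff (sub_ne_zero.mpr hxy)]
  linear_combination key
end
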